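/- arXiv:1712.02614 — 8 statements merged into one kernel-verified Lean document; each statement's English description precedes it below -/
import Mathlib

section
/- Let P be an n×n automaton matrix such that some power of P has a positive column (equivalently, P is SIA). Then P^{n-1} has a positive column. -/
open Matrix Finset
open scoped Classical

def Stochastic {n : ℕ} (P : Matrix (Fin n) (Fin n) ℝ) : Prop :=
  (∀ i j, 0 ≤ P i j) ∧ ∀ i, ∑ j, P i j = 1

def PosColumn {n : ℕ} (M : Matrix (Fin n) (Fin n) ℝ) : Prop :=
  ∃ j, ∀ i, 0 < M i j

def IsSIA {n : ℕ} (P : Matrix (Fin n) (Fin n) ℝ) : Prop :=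
  ∃ p : ℕ, 0 < p ∧ PosColumn (P ^ p)

def Scrambling {n : ℕ} (M : Matrix (Fin n) (Fin n) ℝ) : Prop :=
  ∀ i i', ∃ k, 0 < M i k ∧ 0 < M i' k

noncomputable def conseq {n : ℕ} (M : Matrix (Fin n) (Fin n) ℝ) (S : Finset (Fin n)) :
    Finset (Fin n) :=
  Finset.univ.filter (fun j => ∃ i ∈ S, 0 < M i j)

def Sarymsakov {n : ℕ} (M : Matrix (Fin n) (Fin n) ℝ) : Prop :=
  ∀ S S' : Finset (Fin n), S.Nonempty → S'.Nonempty → Disjoint S S' →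
    (conseq M S ∩ conseq M S').Nonempty ∨ (S ∪ S').card < (conseq M S ∪ conseq M S').card

def AutomatonMatrix {n : ℕ} (P : Matrix (Fin n) (Fin n) ℝ) : Prop :=
  (∀ i j, P i j = 0 ∨ P i j = 1) ∧ ∀ i, ∃! j, P i j = 1

/-! An automaton matrix is the matrix of a self-map `f` of `Fin n`, its `k`-th power is the matrix
of `f^[k]`, and that has a positive column iff `f^[k]` is constant. The images of the iterates
form a decreasing chain of sets, and once one step fails to shrink the image it never shrinks
again. Since some iterate is constant, the chain shrinks strictly until it reaches a single
point, so this happens within `n - 1` steps. -/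

section IterateImage

variable {α : Type*} [Fintype α] [DecidableEq α] (f : α → α)

lemma image_iterate_succ (k : ℕ) : univ.image f^[k + 1] = (univ.image f^[k]).image f := by
  rw [Function.iterate_succ', Finset.image_image]

lemma image_iterate_add_subset (m k : ℕ) : univ.image f^[m + k] ⊆ univ.image f^[m] := by
  rw [Function.iterate_add, ← Finset.image_image]
  exact image_subset_image (subset_univ _)

lemma image_iterate_add_eq_of_succ_eq {k : ℕ} (h : univ.image f^[k + 1] = univ.image f^[k])
    (m : ℕ) : univ.image f^[k + m] = univ.image f^[k] := by
  induction m with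
  | zero => rfl
  | succ m ih => rw [← add_assoc, image_iterate_succ, ih, ← image_iterate_succ, h]

lemma card_image_iterate_le {p : ℕ} (hp : #(univ.image f^[p]) ≤ 1) (k : ℕ) :
    #(univ.image f^[k]) ≤ max 1 (Fintype.card α - k) := by
  induction k with
  | zero => simp
  | succ k ih =>
    rcases (image_iterate_add_subset f k 1).ssubset_or_eq with hlt | heq
    · have := card_lt_card hlt
      omega
    · have hstable := card_le_card (image_iterate_add_subset f p k)
      rw [add_comm, image_iterate_add_eq_of_succ_eq f heq] at hstable
      rw [heq]
      omega

theorem exists_iterate_card_sub_one_eq_of_iterate_eq {p : ℕ} {c : α} (h : ∀ x, f^[p] x = c) :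
    ∃ d, ∀ x, f^[Fintype.card α - 1] x = d := by
  have hp : #(univ.image f^[p]) ≤ 1 := card_le_one.2 fun a ha b hb => by
    obtain ⟨x, -, rfl⟩ := mem_image.1 ha
    obtain ⟨y, -, rfl⟩ := mem_image.1 hb
    rw [h, h]
  have : Nonempty α := ⟨c⟩
  have hcard := card_image_iterate_le f hp (Fintype.card α - 1)
  obtain ⟨d, hd⟩ := card_le_one_iff_subset_singleton.1 (hcard.trans (by omega))
  exact ⟨d, fun x => mem_singleton.1 (hd (mem_image_of_mem _ (mem_univ x)))⟩

end IterateImage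

section FunctionMatrix

variable {ι R : Type*} [Fintype ι] [DecidableEq ι]

def funMatrix [Zero R] [One R] (f : ι → ι) : Matrix ι ι R :=
  of fun i j => if f i = j then 1 else 0

lemma funMatrix_mul [NonAssocSemiring R] (f g : ι → ι) :
    (funMatrix f * funMatrix g : Matrix ι ι R) = funMatrix (g ∘ f) := by
  ext i j
  simp only [funMatrix, of_apply, mul_apply, boole_mul, sum_ite_eq, mem_univ, if_true,
    Function.comp_apply]

lemma funMatrix_pow [Semiring R] (f : ι → ι) (k : ℕ) :
    (funMatrix f : Matrix ι ι R) ^ k = funMatrix (f^[k]) := by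
  induction k with
  | zero => rw [pow_zero, Function.iterate_zero]; ext i j; simp [funMatrix, one_apply]
  | succ k ih => rw [pow_succ, ih, funMatrix_mul, Function.iterate_succ']

end FunctionMatrix

lemma AutomatonMatrix.exists_eq_funMatrix {n : ℕ} {P : Matrix (Fin n) (Fin n) ℝ}
    (hP : AutomatonMatrix P) : ∃ f, P = funMatrix f := by
  choose f hf1 hf2 using hP.2
  refine ⟨f, ext fun i j => ?_⟩
  by_cases h : f i = j
  · simp [funMatrix, h, ← hf1 i]
  · simpa [funMatrix, h] using (hP.1 i j).resolve_right fun h1 => h (hf2 i j h1).symm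

lemma posColumn_funMatrix_iff {n : ℕ} (f : Fin n → Fin n) :
    PosColumn (funMatrix f : Matrix (Fin n) (Fin n) ℝ) ↔ ∃ c, ∀ i, f i = c := by
  simp only [PosColumn, funMatrix, of_apply]
  refine exists_congr fun c => forall_congr' fun i => ?_
  split_ifs with h <;> simp [h]

theorem stmt6 {n : ℕ} (P : Matrix (Fin n) (Fin n) ℝ) (hP : AutomatonMatrix P)
    (hSIA : IsSIA P) :
    PosColumn (P ^ (n - 1)) := by
  obtain ⟨f, rfl⟩ := hP.exists_eq_funMatrix
  obtain ⟨p, -, hcol⟩ := hSIA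
  rw [funMatrix_pow, posColumn_funMatrix_iff] at hcol ⊢
  obtain ⟨c, hc⟩ := hcol
  simpa using exists_iterate_card_sub_one_eq_of_iterate_eq f hc
end

section
/- For every n ≥ 2, there exists an n×n SIA automaton matrix P such that P^{n-2} has no positive column (while P^{n-1} does). Concretely, the matrix corresponding to the function f with f(1) = 1 and f(i) = i-1 for i ≥ 2 has this property. -/
open Matrix Finset
open scoped Classical

theorem stmt7 (n : ℕ) (hn : 2 ≤ n) :
    ∃ P : Matrix (Fin n) (Fin n) ℝ,
      P = Matrix.of (fun i j : Fin n => if (j : ℕ) = (i : ℕ) - 1 then (1 : ℝ) else 0) ∧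
      AutomatonMatrix P ∧ IsSIA P ∧ ¬ PosColumn (P ^ (n - 2)) ∧ PosColumn (P ^ (n - 1)) := by
  set P : Matrix (Fin n) (Fin n) ℝ :=
    Matrix.of (fun i j : Fin n => if (j : ℕ) = (i : ℕ) - 1 then (1 : ℝ) else 0) with hP
  have key : ∀ k (i j : Fin n), (P ^ k) i j = if (j : ℕ) = (i : ℕ) - k then 1 else 0 := by
    intro k
    induction k with
    | zero =>
      intro i j
      by_cases h : i = j
      · simp [h, Matrix.one_apply]
      · have : (j : ℕ) ≠ (i : ℕ) := fun hh => h (Fin.ext hh.symm)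
        simp [Matrix.one_apply, h, this]
    | succ k ih =>
      intro i j
      rw [pow_succ, Matrix.mul_apply]
      have hlt : (i : ℕ) - k < n := lt_of_le_of_lt (Nat.sub_le _ _) i.isLt
      rw [Finset.sum_eq_single (⟨(i : ℕ) - k, hlt⟩ : Fin n)]
      · rw [ih]
        simp [hP, Nat.sub_sub]
      · intro l _ hl
        rw [ih]
        have : (l : ℕ) ≠ (i : ℕ) - k := fun h => hl (Fin.ext h)
        simp [this]
      · simp
  have hPentry : ∀ i j : Fin n, P i j = if (j : ℕ) = (i : ℕ) - 1 then 1 else 0 := fun i j => rfl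
  refine ⟨P, rfl, ⟨fun i j => ?_, fun i => ?_⟩, ⟨n - 1, by omega, ?_⟩, ?_, ?_⟩
  · rw [hPentry]; split <;> simp
  · have hlt : (i : ℕ) - 1 < n := lt_of_le_of_lt (Nat.sub_le _ _) i.isLt
    refine ⟨⟨(i : ℕ) - 1, hlt⟩, by simp [hPentry], fun j hj => ?_⟩
    simp only [hPentry] at hj
    by_cases h : (j : ℕ) = (i : ℕ) - 1
    · exact Fin.ext h
    · rw [if_neg h] at hj; norm_num at hj
  · refine ⟨⟨0, by omega⟩, fun i => ?_⟩
    rw [key]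
    have : ((⟨0, by omega⟩ : Fin n) : ℕ) = (i : ℕ) - (n - 1) := by
      have := i.isLt; simp; omega
    rw [if_pos this]; norm_num
  · rintro ⟨j, hj⟩
    have h0 := hj ⟨0, by omega⟩
    have h1 := hj ⟨n - 1, by omega⟩
    rw [key] at h0 h1
    have hj0 : (j : ℕ) = ((⟨0, by omega⟩ : Fin n) : ℕ) - (n - 2) := by
      by_contra h; rw [if_neg h] at h0; exact lt_irrefl 0 h0
    have hj1 : (j : ℕ) = ((⟨n - 1, by omega⟩ : Fin n) : ℕ) - (n - 2) := by
      by_contra h; rw [if_neg h] at h1; exact lt_irrefl 0 h1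
    simp only [Fin.val_mk] at hj0 hj1
    omega
  · refine ⟨⟨0, by omega⟩, fun i => ?_⟩
    rw [key]
    have : ((⟨0, by omega⟩ : Fin n) : ℕ) = (i : ℕ) - (n - 1) := by
      have := i.isLt; simp; omega
    rw [if_pos this]; norm_num
end

section
/- Let P be an n×n stochastic matrix partitioned into blocks P = [[A, B],[C, D]] with A of size k×k. Suppose there exists p such that the first k columns of P^p are entrywise positive, and no other column of any power of P is positive. Then B = 0 and A is primitive (some power of A is entrywise positive). -/
/-!
A positive entry `B i j` lets the positive column `inl i` of `P ^ p` flow into column `inr j` of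
`P ^ (p + 1)`, which the hypothesis forbids; hence `B = 0`. Then `P` is block lower triangular, so
the top-left block of `P ^ p` is `A ^ p`, and it is positive.
-/

open Matrix

namespace Matrix

section Positivity

variable {ι α : Type*} [Fintype ι] [Semiring α] [PartialOrder α] [IsStrictOrderedRing α]

lemma mul_apply_pos {M N : Matrix ι ι α} (hM : ∀ i j, 0 ≤ M i j) (hN : ∀ i j, 0 ≤ N i j)
    {i l j : ι} (hMil : 0 < M i l) (hNlj : 0 < N l j) : 0 < (M * N) i j :=
  Finset.sum_pos' (fun x _ => mul_nonneg (hM i x) (hN x j))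
    ⟨l, Finset.mem_univ l, mul_pos hMil hNlj⟩

lemma pow_succ_apply_pos_of_col_pos [DecidableEq ι] {P : Matrix ι ι α} (hP : ∀ i j, 0 ≤ P i j)
    {p : ℕ} {l j : ι} (hcol : ∀ i, 0 < (P ^ p) i l) (hlj : 0 < P l j) (i : ι) :
    0 < (P ^ (p + 1)) i j := by
  rw [pow_succ]
  exact mul_apply_pos (pow_apply_nonneg hP p) hP (hcol i) hlj

end Positivity

theorem fromBlocks_zero₁₂_pow {k m α : Type*} [Fintype k] [Fintype m] [DecidableEq k]
    [DecidableEq m] [Semiring α] (A : Matrix k k α) (C : Matrix m k α) (D : Matrix m m α)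
    (q : ℕ) : ∃ C' : Matrix m k α, fromBlocks A 0 C D ^ q = fromBlocks (A ^ q) 0 C' (D ^ q) := by
  induction q with
  | zero => exact ⟨0, by simp [fromBlocks_one]⟩
  | succ q ih =>
    obtain ⟨C', hC'⟩ := ih
    exact ⟨C' * A + D ^ q * C, by simp [pow_succ, hC', fromBlocks_multiply]⟩

end Matrix

theorem stmt9_general {k m : ℕ} (A : Matrix (Fin k) (Fin k) ℝ) (B : Matrix (Fin k) (Fin m) ℝ)
    (C : Matrix (Fin m) (Fin k) ℝ) (D : Matrix (Fin m) (Fin m) ℝ)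
    (hnonneg : ∀ i j, 0 ≤ Matrix.fromBlocks A B C D i j)
    (hp : ∃ p : ℕ, 0 < p ∧ ∀ (j : Fin k) (i : Fin k ⊕ Fin m),
        0 < (Matrix.fromBlocks A B C D ^ p) i (Sum.inl j))
    (hnot : ∀ (q : ℕ), 0 < q → ∀ (j : Fin m),
        ¬ ∀ i, 0 < (Matrix.fromBlocks A B C D ^ q) i (Sum.inr j)) :
    B = 0 ∧ ∃ t : ℕ, 0 < t ∧ ∀ i j, 0 < (A ^ t) i j := by
  obtain ⟨p, hp0, hcol⟩ := hp
  have hB : B = 0 := by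
    ext i j
    by_contra hij
    have hBij : 0 < fromBlocks A B C D (Sum.inl i) (Sum.inr j) :=
      (hnonneg _ _).lt_of_ne (Ne.symm hij)
    exact hnot (p + 1) p.succ_pos j (pow_succ_apply_pos_of_col_pos hnonneg (hcol i) hBij)
  subst hB
  obtain ⟨C', hpow⟩ := fromBlocks_zero₁₂_pow A C D p
  refine ⟨rfl, p, hp0, fun i j => ?_⟩
  simpa [hpow] using hcol j (Sum.inl i)

theorem stmt9 {k m : ℕ} (A : Matrix (Fin k) (Fin k) ℝ) (B : Matrix (Fin k) (Fin m) ℝ)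
    (C : Matrix (Fin m) (Fin k) ℝ) (D : Matrix (Fin m) (Fin m) ℝ)
    (hnonneg : ∀ i j, 0 ≤ Matrix.fromBlocks A B C D i j)
    (hrow : ∀ i, ∑ j, Matrix.fromBlocks A B C D i j = 1)
    (hp : ∃ p : ℕ, 0 < p ∧ ∀ (j : Fin k) (i : Fin k ⊕ Fin m),
        0 < (Matrix.fromBlocks A B C D ^ p) i (Sum.inl j))
    (hnot : ∀ (q : ℕ), 0 < q → ∀ (j : Fin m),
        ¬ ∀ i, 0 < (Matrix.fromBlocks A B C D ^ q) i (Sum.inr j)) :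
    B = 0 ∧ ∃ t : ℕ, 0 < t ∧ ∀ i j, 0 < (A ^ t) i j :=
  stmt9_general A B C D hnonneg hp hnot
end

section
/- Let P be an n×n SIA stochastic matrix and let k be the number of eventually positive columns of P. Then P^{k² − 4k + 3 + n} has a positive column. -/
open Matrix Finset
open scoped Classical

namespace Stmt10Aux

variable {n : ℕ} {P : Matrix (Fin n) (Fin n) ℝ}

lemma pow_entry_nonneg (h0 : ∀ i j, 0 ≤ P i j) : ∀ m i j, 0 ≤ (P ^ m) i j := by
  intro m
  induction m with
  | zero =>
    intro i j
    by_cases h : i = j <;> simp [Matrix.one_apply, h]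
  | succ m ih =>
    intro i j
    rw [pow_succ, Matrix.mul_apply]
    exact Finset.sum_nonneg fun l _ => mul_nonneg (ih i l) (h0 l j)

lemma both_pos {a b : ℝ} (ha : 0 ≤ a) (hb : 0 ≤ b) (h : 0 < a * b) : 0 < a ∧ 0 < b := by
  rcases ha.lt_or_eq with h1 | h1
  · rcases hb.lt_or_eq with h2 | h2
    · exact ⟨h1, h2⟩
    · rw [← h2, mul_zero] at h; exact absurd h (lt_irrefl 0)
  · rw [← h1, zero_mul] at h; exact absurd h (lt_irrefl 0)

lemma mul_entry_pos (h0 : ∀ i j, 0 ≤ P i j) {s t : ℕ} {i l j : Fin n}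
    (h1 : 0 < (P ^ s) i l) (h2 : 0 < (P ^ t) l j) : 0 < (P ^ (s + t)) i j := by
  rw [pow_add, Matrix.mul_apply]
  have hle : (P ^ s) i l * (P ^ t) l j ≤ ∑ m, (P ^ s) i m * (P ^ t) m j :=
    Finset.single_le_sum (fun m _ => mul_nonneg (pow_entry_nonneg h0 s i m)
      (pow_entry_nonneg h0 t m j)) (Finset.mem_univ l)
  exact lt_of_lt_of_le (mul_pos h1 h2) hle

lemma exists_mid (h0 : ∀ i j, 0 ≤ P i j) {s t : ℕ} {i j : Fin n}
    (h : 0 < (P ^ (s + t)) i j) : ∃ l, 0 < (P ^ s) i l ∧ 0 < (P ^ t) l j := by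
  rw [pow_add, Matrix.mul_apply] at h
  obtain ⟨l, _, hl⟩ := Finset.exists_lt_of_sum_lt (f := fun _ => (0 : ℝ)) (by simpa using h)
  exact ⟨l, both_pos (pow_entry_nonneg h0 s i l) (pow_entry_nonneg h0 t l j) hl⟩

lemma row_pos (h0 : ∀ i j, 0 ≤ P i j) (hs : ∀ i, ∑ j, P i j = 1) (i : Fin n) :
    ∃ j, 0 < P i j := by
  by_contra hc
  push_neg at hc
  have h : ∑ j, P i j = 0 := Finset.sum_eq_zero fun j _ => le_antisymm (hc j) (h0 i j)
  rw [hs i] at h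
  norm_num at h

lemma persist (h0 : ∀ i j, 0 ≤ P i j) (hs : ∀ i, ∑ j, P i j = 1)
    {p : ℕ} {j : Fin n} (hcol : ∀ i, 0 < (P ^ p) i j) :
    ∀ d i, 0 < (P ^ (p + d)) i j := by
  intro d
  induction d with
  | zero => simpa using hcol
  | succ d ih =>
    intro i
    obtain ⟨l, hl⟩ := row_pos h0 hs i
    have h1 : 0 < (P ^ 1) i l := by simpa using hl
    have h2 := mul_entry_pos h0 h1 (ih l)
    have he : 1 + (p + d) = p + (d + 1) := by omega
    rwa [he] at h2

lemma submatrix_pow {k : ℕ} (h0 : ∀ i j, 0 ≤ P i j) (f : Fin k → Fin n)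
    (hf : Function.Injective f)
    (hcl : ∀ a j, 0 < P (f a) j → ∃ b, f b = j) :
    ∀ m a b, ((P.submatrix f f) ^ m) a b = (P ^ m) (f a) (f b) := by
  intro m
  induction m with
  | zero =>
    intro a b
    simp [Matrix.one_apply, hf.eq_iff]
  | succ m ih =>
    intro a b
    rw [pow_succ', pow_succ', Matrix.mul_apply, Matrix.mul_apply]
    have hL : ∀ c : Fin k, (P.submatrix f f) a c * ((P.submatrix f f) ^ m) c b
        = P (f a) (f c) * (P ^ m) (f c) (f b) := fun c => by
      rw [ih c b]; rfl
    rw [Finset.sum_congr rfl fun c _ => hL c]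
    rw [show (∑ c : Fin k, P (f a) (f c) * (P ^ m) (f c) (f b))
        = ∑ l ∈ Finset.univ.image f, P (f a) l * (P ^ m) l (f b) from
      (Finset.sum_image (f := fun l => P (f a) l * (P ^ m) l (f b))
        fun x _ y _ h => hf h).symm]
    apply Finset.sum_subset (Finset.subset_univ _)
    intro l _ hl
    have hz : P (f a) l = 0 := by
      by_contra hne
      obtain ⟨b', rfl⟩ := hcl a l ((h0 _ _).lt_of_ne (Ne.symm hne))
      exact hl (Finset.mem_image_of_mem f (Finset.mem_univ b'))
    rw [hz, zero_mul]

noncomputable def stepSet {n : ℕ} (P : Matrix (Fin n) (Fin n) ℝ) (S : Finset (Fin n)) :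
    Finset (Fin n) :=
  Finset.univ.filter fun i => ∃ l ∈ S, 0 < P i l

noncomputable def RSet {n : ℕ} (P : Matrix (Fin n) (Fin n) ℝ) (C : Finset (Fin n)) (t : ℕ) :
    Finset (Fin n) := (stepSet P)^[t] C

lemma RSet_succ (P : Matrix (Fin n) (Fin n) ℝ) (C : Finset (Fin n)) (t : ℕ) :
    RSet P C (t + 1) = stepSet P (RSet P C t) :=
  Function.iterate_succ_apply' _ _ _

lemma mem_RSet (h0 : ∀ i j, 0 ≤ P i j) (C : Finset (Fin n)) :
    ∀ t i, i ∈ RSet P C t ↔ ∃ c ∈ C, 0 < (P ^ t) i c := by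
  intro t
  induction t with
  | zero =>
    intro i
    constructor
    · intro hi
      exact ⟨i, hi, by simp [Matrix.one_apply]⟩
    · rintro ⟨c, hc, hpos⟩
      by_cases h : i = c
      · exact h ▸ hc
      · simp [Matrix.one_apply, h] at hpos
  | succ t ih =>
    intro i
    rw [RSet_succ]
    constructor
    · intro hi
      obtain ⟨l, hl, hil⟩ := (Finset.mem_filter.mp hi).2
      obtain ⟨c, hc, hlc⟩ := (ih l).mp hl
      have h1 : 0 < (P ^ 1) i l := by simpa using hil
      have h2 := mul_entry_pos h0 h1 hlc
      exact ⟨c, hc, by rwa [show 1 + t = t + 1 from by omega] at h2⟩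
    · rintro ⟨c, hc, hpos⟩
      rw [show t + 1 = 1 + t from by omega] at hpos
      obtain ⟨l, h1, h2⟩ := exists_mid h0 hpos
      have hl : l ∈ RSet P C t := (ih l).mpr ⟨c, hc, h2⟩
      exact Finset.mem_filter.mpr ⟨Finset.mem_univ i, ⟨l, hl, by simpa using h1⟩⟩

end Stmt10Aux

theorem stmt10 {n : ℕ} (P : Matrix (Fin n) (Fin n) ℝ) (hP : Stochastic P)
    (hSIA : IsSIA P) (k : ℕ)
    (hk : k = Set.ncard {j : Fin n | ∃ p : ℕ, 0 < p ∧ ∀ i, 0 < (P ^ p) i j})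
    (hloc : ∀ (m : ℕ), 2 ≤ m → ∀ A : Matrix (Fin m) (Fin m) ℝ,
        (∀ i j, 0 ≤ A i j) → (∃ t : ℕ, 0 < t ∧ ∀ i j, 0 < (A ^ t) i j) →
        ∃ j, ∀ i, 0 < (A ^ (m ^ 2 + 3 - 3 * m)) i j) :
    PosColumn (P ^ (k ^ 2 + 3 + n - 4 * k)) := by
  classical
  obtain ⟨h0, hsum⟩ := hP
  set C : Finset (Fin n) := Finset.univ.filter
      (fun j => ∃ p : ℕ, 0 < p ∧ ∀ i, 0 < (P ^ p) i j) with hCdef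
  have hmemC : ∀ j, j ∈ C ↔ ∃ p : ℕ, 0 < p ∧ ∀ i, 0 < (P ^ p) i j := by
    intro j
    simp [hCdef]
  have hkC : k = C.card := by
    rw [hk, show {j : Fin n | ∃ p : ℕ, 0 < p ∧ ∀ i, 0 < (P ^ p) i j} = ↑C from by
      ext j; simpa using (hmemC j).symm, Set.ncard_coe_finset]
  have hCne : C.Nonempty := by
    obtain ⟨p, hp, j, hj⟩ := hSIA
    exact ⟨j, (hmemC j).mpr ⟨p, hp, hj⟩⟩
  have hclosed : ∀ c ∈ C, ∀ j, 0 < P c j → j ∈ C := by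
    intro c hc j hj
    obtain ⟨p, hp, hcol⟩ := (hmemC c).mp hc
    refine (hmemC j).mpr ⟨p + 1, Nat.succ_pos _, fun i => ?_⟩
    exact Stmt10Aux.mul_entry_pos h0 (hcol i) (by simpa using hj)
  have hsucc : ∀ c ∈ C, ∃ c' ∈ C, 0 < P c c' := by
    intro c hc
    obtain ⟨c', hc'⟩ := Stmt10Aux.row_pos h0 hsum c
    exact ⟨c', hclosed c hc c' hc', hc'⟩
  have hk1 : 1 ≤ k := by
    rw [hkC]
    exact Finset.card_pos.mpr hCne
  have hkn : k ≤ n := by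
    rw [hkC]
    calc C.card ≤ Finset.univ.card := Finset.card_le_univ C
      _ = n := by simp
  have hsel : ∀ c ∈ C, ∃ p, 0 < p ∧ ∀ i, 0 < (P ^ p) i c := fun c hc => (hmemC c).mp hc
  choose! g hg1 hg2 using hsel
  set q : ℕ := C.sup g + 1 with hqdef
  have hq : ∀ c ∈ C, ∀ i, 0 < (P ^ q) i c := by
    intro c hc i
    have hle : g c ≤ q := le_trans (Finset.le_sup hc) (Nat.le_succ _)
    have h2 := Stmt10Aux.persist h0 hsum (hg2 c hc) (q - g c) i
    rwa [Nat.add_sub_cancel' hle] at h2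
  have hcard : Fintype.card {x // x ∈ C} = k := by rw [Fintype.card_coe, hkC]
  obtain ⟨e⟩ : Nonempty (Fin k ≃ {x // x ∈ C}) := ⟨(Fintype.equivFinOfCardEq hcard).symm⟩
  set f : Fin k → Fin n := fun a => (e a : Fin n) with hfdef
  have hfinj : Function.Injective f := fun a b h => e.injective (Subtype.ext h)
  have hfmem : ∀ a, f a ∈ C := fun a => (e a).2
  have hfsurj : ∀ c ∈ C, ∃ a, f a = c := fun c hc => ⟨e.symm ⟨c, hc⟩, by simp [hfdef]⟩
  have hcl : ∀ a j, 0 < P (f a) j → ∃ b, f b = j := fun a j h =>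
    hfsurj j (hclosed (f a) (hfmem a) j h)
  have hsub := Stmt10Aux.submatrix_pow h0 f hfinj hcl
  have Hcol : ∃ j0 ∈ C, ∀ c ∈ C, 0 < (P ^ (k ^ 2 + 3 - 3 * k)) c j0 := by
    rcases eq_or_lt_of_le hk1 with h1 | h2
    · -- k = 1
      subst h1
      obtain ⟨c0, hc0⟩ := Finset.card_eq_one.mp hkC.symm
      refine ⟨c0, by simp [hc0], fun c hc => ?_⟩
      rw [hc0, Finset.mem_singleton] at hc
      subst hc
      obtain ⟨c', hc', hpos⟩ := hsucc c (by simp [hc0])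
      rw [hc0, Finset.mem_singleton] at hc'
      subst hc'
      rw [show 1 ^ 2 + 3 - 3 * 1 = 1 from by norm_num, pow_one]
      exact hpos
    · -- k ≥ 2
      obtain ⟨j0, hj0⟩ := hloc k h2 (P.submatrix f f)
        (fun i j => h0 _ _)
        ⟨q, Nat.succ_pos _, fun a b => by rw [hsub]; exact hq (f b) (hfmem b) (f a)⟩
      refine ⟨f j0, hfmem j0, fun c hc => ?_⟩
      obtain ⟨a, rfl⟩ := hfsurj c hc
      rw [← hsub]
      exact hj0 a
  obtain ⟨j0, hj0C, hj0⟩ := Hcol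
  -- reachability: every state reaches C within n - k steps
  have hmono : ∀ t, Stmt10Aux.RSet P C t ⊆ Stmt10Aux.RSet P C (t + 1) := by
    intro t i hi
    rw [Stmt10Aux.mem_RSet h0] at hi ⊢
    obtain ⟨c, hc, hic⟩ := hi
    obtain ⟨c', hc', hcc'⟩ := hsucc c hc
    exact ⟨c', hc', Stmt10Aux.mul_entry_pos h0 hic (by simpa using hcc')⟩
  have hmono' : ∀ s d, Stmt10Aux.RSet P C s ⊆ Stmt10Aux.RSet P C (s + d) := by
    intro s d
    induction d with
    | zero => exact subset_rfl
    | succ d ih => exact ih.trans (hmono (s + d))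
  have hfix : ∀ t, Stmt10Aux.RSet P C (t + 1) = Stmt10Aux.RSet P C t →
      ∀ d, Stmt10Aux.RSet P C (t + d) = Stmt10Aux.RSet P C t := by
    intro t h d
    induction d with
    | zero => rfl
    | succ d ih =>
      rw [show t + (d + 1) = (t + d) + 1 from by omega, Stmt10Aux.RSet_succ, ih,
        ← Stmt10Aux.RSet_succ, h]
  have hall : ∀ i, ∃ t, i ∈ Stmt10Aux.RSet P C t := by
    intro i
    obtain ⟨c0, hc0⟩ := hCne
    exact ⟨g c0, (Stmt10Aux.mem_RSet h0 C _ i).mpr ⟨c0, hc0, hg2 c0 hc0 i⟩⟩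
  have hgrow : ∀ t, Stmt10Aux.RSet P C t = Finset.univ ∨
      k + t ≤ (Stmt10Aux.RSet P C t).card := by
    intro t
    induction t with
    | zero => right; simp [Stmt10Aux.RSet, hkC]
    | succ t ih =>
      rcases ih with h | h
      · left
        exact Finset.eq_univ_of_forall fun i => hmono t (h ▸ Finset.mem_univ i)
      · by_cases heq : Stmt10Aux.RSet P C (t + 1) = Stmt10Aux.RSet P C t
        · left
          rw [heq]
          apply Finset.eq_univ_of_forall
          intro i
          obtain ⟨s, hs⟩ := hall i
          rcases Nat.le_total s t with hle | hle
          · obtain ⟨d, rfl⟩ := Nat.exists_eq_add_of_le hle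
            exact hmono' s d hs
          · obtain ⟨d, rfl⟩ := Nat.exists_eq_add_of_le hle
            rw [hfix t heq d] at hs
            exact hs
        · right
          have hcard2 := Finset.card_lt_card ((hmono t).ssubset_of_ne fun h' => heq h'.symm)
          omega
  have hfull : Stmt10Aux.RSet P C (n - k) = Finset.univ := by
    rcases hgrow (n - k) with h | h
    · exact h
    · apply Finset.eq_univ_of_card
      have h1 : (Stmt10Aux.RSet P C (n - k)).card ≤ n := by
        calc (Stmt10Aux.RSet P C (n - k)).card ≤ Finset.univ.card :=
              Finset.card_le_univ _
          _ = n := by simp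
      rw [Fintype.card_fin]
      omega
  refine ⟨j0, fun i => ?_⟩
  have hi : i ∈ Stmt10Aux.RSet P C (n - k) := hfull ▸ Finset.mem_univ i
  obtain ⟨c, hc, hic⟩ := (Stmt10Aux.mem_RSet h0 C _ i).mp hi
  have hkey := Stmt10Aux.mul_entry_pos h0 hic (hj0 c hc)
  have h3 : 3 * k ≤ k ^ 2 + 3 := by
    rcases Nat.lt_or_ge k 3 with h | h
    · interval_cases k <;> norm_num
    · calc 3 * k ≤ k * k := Nat.mul_le_mul_right k h
        _ = k ^ 2 := (pow_two k).symm
        _ ≤ k ^ 2 + 3 := Nat.le_add_right _ _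
  have harith : n - k + (k ^ 2 + 3 - 3 * k) = k ^ 2 + 3 + n - 4 * k := by
    revert h3
    generalize k ^ 2 = K
    intro h3
    omega
  rwa [harith] at hkey
end

section
/- Every n×n SIA stochastic matrix P satisfies: P^{n² − 3n + 3} has a positive column. -/
open Matrix Finset
open scoped Classical

lemma aux_pow_nonneg {m : ℕ} {Q : Matrix (Fin m) (Fin m) ℝ} (hQ : ∀ i j, 0 ≤ Q i j) :
    ∀ q i j, 0 ≤ (Q ^ q) i j := by
  intro q
  induction q with
  | zero => intro i j; simp [Matrix.one_apply]; split <;> norm_num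
  | succ q ih =>
    intro i j
    rw [pow_succ, Matrix.mul_apply]
    exact Finset.sum_nonneg fun k _ => mul_nonneg (ih i k) (hQ k j)

lemma aux_pow_rowsum {m : ℕ} {Q : Matrix (Fin m) (Fin m) ℝ} (hQ : Stochastic Q) :
    ∀ q i, ∑ j, (Q ^ q) i j = 1 := by
  intro q
  induction q with
  | zero => intro i; simp [Matrix.one_apply]
  | succ q ih =>
    intro i
    simp only [pow_succ', Matrix.mul_apply]
    rw [Finset.sum_comm]
    have : ∀ k, ∑ j, Q i k * (Q ^ q) k j = Q i k := by
      intro k; rw [← Finset.mul_sum, ih k, mul_one]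
    simp_rw [this]
    exact hQ.2 i

lemma aux_exists_pos {m : ℕ} {Q : Matrix (Fin m) (Fin m) ℝ} (hQ : Stochastic Q) (i : Fin m) :
    ∃ k, 0 < Q i k := by
  by_contra h
  push_neg at h
  have : ∑ j, Q i j = 0 := Finset.sum_eq_zero fun j _ => le_antisymm (h j) (hQ.1 i j)
  rw [hQ.2 i] at this; norm_num at this

lemma aux_pos_trans {m : ℕ} {Q : Matrix (Fin m) (Fin m) ℝ} (hQ : ∀ i j, 0 ≤ Q i j)
    {a b : ℕ} {i k j : Fin m} (h1 : 0 < (Q ^ a) i k) (h2 : 0 < (Q ^ b) k j) :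
    0 < (Q ^ (a + b)) i j := by
  rw [pow_add, Matrix.mul_apply]
  exact Finset.sum_pos'
    (fun l _ => mul_nonneg (aux_pow_nonneg hQ a i l) (aux_pow_nonneg hQ b l j))
    ⟨k, Finset.mem_univ k, mul_pos h1 h2⟩

lemma aux_col_persist {m : ℕ} {Q : Matrix (Fin m) (Fin m) ℝ} (hQ : Stochastic Q)
    {M : ℕ} {j : Fin m} (hcol : ∀ i, 0 < (Q ^ M) i j) :
    ∀ q, M ≤ q → ∀ i, 0 < (Q ^ q) i j := by
  intro q hq
  induction q, hq using Nat.le_induction with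
  | base => exact hcol
  | succ q hq ih =>
    intro i
    obtain ⟨k, hk⟩ := aux_exists_pos hQ i
    have : 0 < (Q ^ (1 + q)) i j := aux_pos_trans hQ.1 (by rwa [pow_one]) (ih k)
    rwa [Nat.add_comm] at this

lemma aux_arith1 (n : ℕ) (hn : 1 ≤ n) : 0 + (n - 1) ≤ n ^ 2 + 3 - 3 * n := by
  have h4 : 4 * n ≤ n * n + 4 := by
    rcases Nat.lt_or_ge n 2 with h | h
    · interval_cases n <;> norm_num
    · obtain ⟨e, rfl⟩ : ∃ e, n = 2 + e := ⟨n - 2, by omega⟩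
      nlinarith
  have h2 : n ^ 2 = n * n := sq n
  generalize n * n = a at *
  omega

lemma aux_arith2 (m n : ℕ) (hm : 2 ≤ m) (hmn : m ≤ n) :
    m ^ 2 + 3 - 3 * m + (n - m) ≤ n ^ 2 + 3 - 3 * n := by
  have hkey : m * m + 4 * n ≤ n * n + 4 * m := by
    obtain ⟨e, rfl⟩ : ∃ e, m = 2 + e := ⟨m - 2, by omega⟩
    obtain ⟨d, rfl⟩ : ∃ d, n = 2 + e + d := ⟨n - (2 + e), by omega⟩
    nlinarith
  have h1 : 3 * m ≤ m * m + 3 := by nlinarith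
  have h2 : 3 * n ≤ n * n + 3 := by nlinarith
  have hm2 : m ^ 2 = m * m := sq m
  have hn2 : n ^ 2 = n * n := sq n
  generalize m * m = a at *
  generalize n * n = b at *
  omega

theorem stmt11 {n : ℕ} (P : Matrix (Fin n) (Fin n) ℝ) (hP : Stochastic P)
    (hSIA : IsSIA P)
    (hloc : ∀ (m : ℕ), 2 ≤ m → ∀ A : Matrix (Fin m) (Fin m) ℝ,
        (∀ i j, 0 ≤ A i j) → (∃ t : ℕ, 0 < t ∧ ∀ i j, 0 < (A ^ t) i j) →
        ∃ j, ∀ i, 0 < (A ^ (m ^ 2 + 3 - 3 * m)) i j) :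
    PosColumn (P ^ (n ^ 2 + 3 - 3 * n)) := by
  obtain ⟨p, hp, j₀, hj₀⟩ := hSIA
  rcases Nat.eq_zero_or_pos n with rfl | hn
  · exact j₀.elim0
  -- column j₀ of P^q is positive for all q ≥ p
  have hcolP : ∀ q, p ≤ q → ∀ i, 0 < (P ^ q) i j₀ := aux_col_persist hP hj₀
  -- the set of states reachable from j₀
  set C : Finset (Fin n) := Finset.univ.filter (fun k => ∃ s, 0 < (P ^ s) j₀ k) with hC
  have hj₀C : j₀ ∈ C := by
    simp only [hC, Finset.mem_filter, Finset.mem_univ, true_and]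
    exact ⟨0, by simp [Matrix.one_apply]⟩
  have hmemC : ∀ k, k ∈ C ↔ ∃ s, 0 < (P ^ s) j₀ k := by
    intro k; simp [hC]
  have hclosed : ∀ k ∈ C, ∀ l, 0 < P k l → l ∈ C := by
    intro k hk l hl
    obtain ⟨s, hs⟩ := (hmemC k).1 hk
    exact (hmemC l).2 ⟨s + 1, aux_pos_trans hP.1 hs (by rwa [pow_one])⟩
  have hzero : ∀ k ∈ C, ∀ l, l ∉ C → P k l = 0 := by
    intro k hk l hl
    by_contra h
    exact hl (hclosed k hk l (lt_of_le_of_ne (hP.1 k l) (Ne.symm h)))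
  set m : ℕ := C.card with hmdef
  have hm1 : 1 ≤ m := Finset.card_pos.2 ⟨j₀, hj₀C⟩
  have hmn : m ≤ n := le_trans (Finset.card_le_univ C) (by simp)
  -- the submatrix
  let e := C.orderIsoOfFin hmdef.symm
  let f : Fin m → Fin n := fun a => (e a : Fin n)
  have hf_mem : ∀ a, f a ∈ C := fun a => (e a).2
  have hf_inj : Function.Injective f := fun a b h => e.injective (Subtype.ext h)
  have hf_surj : ∀ l ∈ C, ∃ a, f a = l := by
    intro l hl
    exact ⟨e.symm ⟨l, hl⟩, congrArg Subtype.val (e.apply_symm_apply ⟨l, hl⟩)⟩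
  have hsum : ∀ (g : Fin n → ℝ), ∑ a, g (f a) = ∑ l ∈ C, g l := by
    intro g
    rw [← Finset.sum_coe_sort C g]
    exact Fintype.sum_equiv e.toEquiv _ _ (fun a => rfl)
  set A : Matrix (Fin m) (Fin m) ℝ := Matrix.of (fun a b => P (f a) (f b)) with hA
  have hAapp : ∀ a b, A a b = P (f a) (f b) := fun a b => rfl
  have hAnn : ∀ a b, 0 ≤ A a b := fun a b => hP.1 _ _
  have hCsum : ∀ l₀ ∈ C, ∀ (g : Fin n → ℝ), ∑ l ∈ C, P l₀ l * g l = ∑ l, P l₀ l * g l := by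
    intro l₀ hl₀ g
    apply Finset.sum_subset (Finset.subset_univ C)
    intro l _ hl
    rw [hzero l₀ hl₀ l hl, zero_mul]
  have hAstoch : Stochastic A := by
    refine ⟨hAnn, fun a => ?_⟩
    have h1 : ∑ b, A a b = ∑ l ∈ C, P (f a) l * 1 := by
      rw [← hsum (fun l => P (f a) l * 1)]; simp [hAapp]
    rw [h1, hCsum (f a) (hf_mem a)]
    simpa using hP.2 (f a)
  have hApow : ∀ q a b, (A ^ q) a b = (P ^ q) (f a) (f b) := by
    intro q
    induction q with
    | zero =>
      intro a b
      by_cases h : a = b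
      · subst h; simp [Matrix.one_apply]
      · have hfne : f a ≠ f b := fun hc => h (hf_inj hc)
        simp [Matrix.one_apply, h, hfne]
    | succ q ih =>
      intro a b
      rw [pow_succ', pow_succ', Matrix.mul_apply, Matrix.mul_apply]
      have h1 : ∑ c, A a c * (A ^ q) c b = ∑ l ∈ C, P (f a) l * (P ^ q) l (f b) := by
        rw [← hsum (fun l => P (f a) l * (P ^ q) l (f b))]
        apply Finset.sum_congr rfl
        intro c _
        rw [hAapp, ih]
      rw [h1, hCsum (f a) (hf_mem a)]
  -- A is primitive
  have hsC : ∀ c : C, ∃ s, 0 < (P ^ s) j₀ (c : Fin n) := fun c => (hmemC c).1 c.2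
  choose sfn hsfn using hsC
  set S : ℕ := Finset.univ.sup sfn with hS
  have hAprim : ∃ t : ℕ, 0 < t ∧ ∀ a b, 0 < (A ^ t) a b := by
    refine ⟨p + S, by omega, fun a b => ?_⟩
    set c : C := ⟨f b, hf_mem b⟩ with hc
    have hsc : sfn c ≤ S := Finset.le_sup (Finset.mem_univ c)
    have h1 : 0 < (P ^ (p + S - sfn c)) (f a) j₀ := hcolP _ (by omega) _
    have h2 : 0 < (P ^ (sfn c)) j₀ (f b) := hsfn c
    have h3 : 0 < (P ^ (p + S - sfn c + sfn c)) (f a) (f b) := aux_pos_trans hP.1 h1 h2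
    rw [hApow]
    have : p + S - sfn c + sfn c = p + S := by omega
    rwa [this] at h3
  -- get a good column j' and threshold M
  obtain ⟨j', M, hcol', harith⟩ :
      ∃ (j' : Fin n) (M : ℕ), (∀ q, M ≤ q → ∀ c ∈ C, 0 < (P ^ q) c j') ∧
        M + (n - m) ≤ n ^ 2 + 3 - 3 * n := by
    rcases Nat.lt_or_ge m 2 with hm2 | hm2
    · -- m = 1 : C = {j₀}, absorbing
      have hmeq : m = 1 := by omega
      have hCeq : C = {j₀} := by
        apply Finset.eq_singleton_iff_unique_mem.2
        refine ⟨hj₀C, fun x hx => ?_⟩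
        by_contra hne
        have : 2 ≤ C.card := Finset.one_lt_card.2 ⟨x, hx, j₀, hj₀C, hne⟩
        omega
      have hPj : P j₀ j₀ = 1 := by
        have := hP.2 j₀
        rw [Finset.sum_eq_single j₀ (fun l _ hl => hzero j₀ hj₀C l (by
          rw [hCeq]; simp [hl])) (by simp)] at this
        exact this
      have hdiag : ∀ q, 0 < (P ^ q) j₀ j₀ := by
        intro q
        induction q with
        | zero => simp [Matrix.one_apply]
        | succ q ih =>
          exact aux_pos_trans hP.1 ih (by rw [pow_one, hPj]; norm_num)
      refine ⟨j₀, 0, fun q _ c hc => ?_, ?_⟩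
      · rw [hCeq, Finset.mem_singleton] at hc
        subst hc; exact hdiag q
      · rw [hmeq]
        exact aux_arith1 n hn
    · -- m ≥ 2 : use hloc on A
      obtain ⟨jA, hjA⟩ := hloc m hm2 A hAnn hAprim
      have hAcol : ∀ q, m ^ 2 + 3 - 3 * m ≤ q → ∀ a, 0 < (A ^ q) a jA :=
        aux_col_persist hAstoch hjA
      refine ⟨f jA, m ^ 2 + 3 - 3 * m, fun q hq c hc => ?_, ?_⟩
      · obtain ⟨a, rfl⟩ := hf_surj c hc
        have := hAcol q hq a
        rwa [hApow] at this
      · exact aux_arith2 m n hm2 hmn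
  -- reachability: every state reaches C within n - m steps
  set g : ℕ → Finset (Fin n) :=
    fun d => Finset.univ.filter (fun i => ∃ e ≤ d, ∃ c ∈ C, 0 < (P ^ e) i c) with hg
  have hgmem : ∀ d i, i ∈ g d ↔ ∃ e ≤ d, ∃ c ∈ C, 0 < (P ^ e) i c := by
    intro d i; simp [hg]
  have hgmono : ∀ d₁ d₂, d₁ ≤ d₂ → g d₁ ⊆ g d₂ := by
    intro d₁ d₂ h i hi
    obtain ⟨e', he', c, hc, hpos⟩ := (hgmem d₁ i).1 hi
    exact (hgmem d₂ i).2 ⟨e', le_trans he' h, c, hc, hpos⟩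
  have hgC : C ⊆ g 0 := by
    intro k hk
    exact (hgmem 0 k).2 ⟨0, le_rfl, k, hk, by simp [Matrix.one_apply]⟩
  have hgp : ∀ i, i ∈ g p := fun i => (hgmem p i).2 ⟨p, le_rfl, j₀, hj₀C, hj₀ i⟩
  have hgsucc : ∀ d i k, k ∈ g d → 0 < P i k → i ∈ g (d + 1) := by
    intro d i k hk hik
    obtain ⟨e', he', c, hc, hpos⟩ := (hgmem d k).1 hk
    refine (hgmem (d + 1) i).2 ⟨1 + e', by omega, c, hc, ?_⟩
    exact aux_pos_trans hP.1 (by rwa [pow_one]) hpos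
  have hgstep : ∀ d i, i ∈ g (d + 1) → i ∈ g d ∨ ∃ k, 0 < P i k ∧ k ∈ g d := by
    intro d i hi
    obtain ⟨e', he', c, hc, hpos⟩ := (hgmem (d + 1) i).1 hi
    rcases Nat.lt_or_ge e' (d + 1) with h | h
    · exact Or.inl ((hgmem d i).2 ⟨e', by omega, c, hc, hpos⟩)
    · have he'' : e' = d + 1 := by omega
      subst he''
      rw [pow_succ', Matrix.mul_apply] at hpos
      have : ∃ k, 0 < P i k * (P ^ d) k c := by
        by_contra hcon
        push_neg at hcon
        have : ∑ k, P i k * (P ^ d) k c = 0 := Finset.sum_eq_zero fun k _ =>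
          le_antisymm (hcon k) (mul_nonneg (hP.1 i k) (aux_pow_nonneg hP.1 d k c))
        rw [this] at hpos; norm_num at hpos
      obtain ⟨k, hk⟩ := this
      have h1 : 0 < P i k := by
        rcases mul_pos_iff.1 hk with ⟨h1, _⟩ | ⟨h1, _⟩
        · exact h1
        · exact absurd (hP.1 i k) (not_le.2 h1)
      have h2 : 0 < (P ^ d) k c := by
        rcases mul_pos_iff.1 hk with ⟨_, h2⟩ | ⟨_, h2⟩
        · exact h2
        · exact absurd (aux_pow_nonneg hP.1 d k c) (not_le.2 h2)
      exact Or.inr ⟨k, h1, (hgmem d k).2 ⟨d, le_rfl, c, hc, h2⟩⟩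
  have hgstab : ∀ d, g d = g (d + 1) → ∀ k, g (d + k) = g d := by
    intro d hd k
    induction k with
    | zero => rfl
    | succ k ih =>
      apply Finset.Subset.antisymm
      · intro i hi
        rcases hgstep (d + k) i hi with h | ⟨k', hk'1, hk'2⟩
        · rwa [ih] at h
        · rw [ih] at hk'2
          have : i ∈ g (d + 1) := hgsucc d i k' hk'2 hk'1
          rwa [← hd] at this
      · exact hgmono d (d + (k + 1)) (by omega)
  have hclaim : ∀ d, (∀ i, i ∈ g d) ∨ m + d ≤ (g d).card := by
    intro d
    induction d with
    | zero =>
      right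
      simpa using Finset.card_le_card hgC
    | succ d ih =>
      rcases ih with h | h
      · exact Or.inl (fun i => hgmono d (d + 1) (by omega) (h i))
      · by_cases heq : g d = g (d + 1)
        · left
          intro i
          have h1 : g (d + p) = g d := hgstab d heq p
          have : i ∈ g (d + p) := hgmono p (d + p) (by omega) (hgp i)
          rw [h1, heq] at this
          exact this
        · right
          have hsub : g d ⊂ g (d + 1) := ⟨hgmono d (d + 1) (by omega), fun hs =>
            heq (Finset.Subset.antisymm (hgmono d (d + 1) (by omega)) hs)⟩
          have := Finset.card_lt_card hsub
          omega
  have hcover : ∀ i, i ∈ g (n - m) := by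
    rcases hclaim (n - m) with h | h
    · exact h
    · intro i
      have hcard : (g (n - m)).card = n := by
        have h1 : (g (n - m)).card ≤ n := le_trans (Finset.card_le_univ _) (by simp)
        omega
      have : g (n - m) = Finset.univ := Finset.eq_univ_of_card _ (by simp [hcard])
      rw [this]; exact Finset.mem_univ i
  -- final assembly
  refine ⟨j', fun i => ?_⟩
  obtain ⟨d, hd, c, hc, hpos⟩ := (hgmem (n - m) i).1 (hcover i)
  have hq : M ≤ n ^ 2 + 3 - 3 * n - d := by omega
  have h2 : 0 < (P ^ (n ^ 2 + 3 - 3 * n - d)) c j' := hcol' _ hq c hc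
  have h3 : 0 < (P ^ (d + (n ^ 2 + 3 - 3 * n - d))) i j' := aux_pos_trans hP.1 hpos h2
  have heq : d + (n ^ 2 + 3 - 3 * n - d) = n ^ 2 + 3 - 3 * n := by omega
  rwa [heq] at h3
end

section
/- If the product of matrices P = U·V (U, V products of stochastic matrices) is SIA, then the cyclic shift V·U is also SIA. -/
open Matrix Finset
open scoped Classical

lemma entrywise_nonneg_mul {n : ℕ} {A B : Matrix (Fin n) (Fin n) ℝ}
    (hA : ∀ i j, 0 ≤ A i j) (hB : ∀ i j, 0 ≤ B i j) :
    ∀ i j, 0 ≤ (A * B) i j := by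
  intro i j
  rw [Matrix.mul_apply]
  exact Finset.sum_nonneg fun k _ => mul_nonneg (hA i k) (hB k j)

lemma entrywise_nonneg_pow {n : ℕ} {A : Matrix (Fin n) (Fin n) ℝ}
    (hA : ∀ i j, 0 ≤ A i j) : ∀ m, ∀ i j, 0 ≤ (A ^ m) i j := by
  intro m
  induction m with
  | zero =>
    intro i j
    simp only [pow_zero, Matrix.one_apply]
    split <;> norm_num
  | succ m ih =>
    rw [pow_succ]
    exact entrywise_nonneg_mul ih hA

lemma exists_pos_in_row {n : ℕ} {A : Matrix (Fin n) (Fin n) ℝ}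
    (hA : Stochastic A) (i : Fin n) : ∃ k, 0 < A i k := by
  by_contra hc
  push_neg at hc
  have : ∑ j, A i j = 0 :=
    Finset.sum_eq_zero fun j _ => le_antisymm (hc j) (hA.1 i j)
  rw [hA.2 i] at this
  norm_num at this

theorem stmt14 {n : ℕ} (U V : Matrix (Fin n) (Fin n) ℝ)
    (hU : Stochastic U) (hV : Stochastic V) (h : IsSIA (U * V)) :
    IsSIA (V * U) := by
  obtain ⟨p, hp, j, hj⟩ := h
  -- positive column of V * (U*V)^p
  have hUVnn : ∀ i k, 0 ≤ ((U * V) ^ p) i k :=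
    entrywise_nonneg_pow (entrywise_nonneg_mul hU.1 hV.1) p
  have hA : ∀ i, 0 < (V * (U * V) ^ p) i j := by
    intro i
    rw [Matrix.mul_apply]
    obtain ⟨k, hk⟩ := exists_pos_in_row hV i
    refine Finset.sum_pos' (fun k' _ => mul_nonneg (hV.1 i k') (hUVnn k' j)) ?_
    exact ⟨k, Finset.mem_univ k, mul_pos hk (hj k)⟩
  obtain ⟨l, hl⟩ := exists_pos_in_row hU j
  have hAnn : ∀ i k, 0 ≤ (V * (U * V) ^ p) i k :=
    entrywise_nonneg_mul hV.1 hUVnn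
  refine ⟨p + 1, Nat.succ_pos p, l, fun i => ?_⟩
  have hsemi : SemiconjBy V (U * V) (V * U) := by
    simp [SemiconjBy, mul_assoc]
  have heq : (V * U) ^ (p + 1) = V * (U * V) ^ p * U := by
    have := (hsemi.pow_right p).eq
    calc (V * U) ^ (p + 1) = (V * U) ^ p * (V * U) := pow_succ _ _
      _ = ((V * U) ^ p * V) * U := by rw [mul_assoc]
      _ = (V * (U * V) ^ p) * U := by rw [← this]
  rw [heq, Matrix.mul_apply]
  refine Finset.sum_pos' (fun k' _ => mul_nonneg (hAnn i k') (hU.1 k' l)) ?_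
  exact ⟨j, Finset.mem_univ j, mul_pos (hA i) hl⟩
end

section
/- Let S be a finite set of stochastic matrices whose shortest SIA product has length ℓ. Then there is a Lyndon word of length ℓ over the alphabet S whose corresponding product is SIA. -/
open Matrix Finset
open scoped Classical

/-!
Rotating a word cyclically conjugates its product, and `A * B` is SIA iff `B * A` is, since
`(A * B) ^ (p + 1) = A * (B * A) ^ p * B` and multiplying a stochastic matrix with a positive
column by stochastic matrices on either side keeps a positive column. So every rotation of a
shortest SIA word `w` is again a shortest SIA word; take the lexicographically least one, `w₀`.
It is Lyndon: if `w₀ = u ++ v` equalled its rotation `v ++ u`, then `u` and `v` would be powers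
of a common word `z`, making `w₀ = z ^ k` with `k ≥ 2`, and then `z` would be a shorter SIA word.
-/

section Stochastic

variable {n : ℕ} {A B M : Matrix (Fin n) (Fin n) ℝ}

lemma Stochastic.one : Stochastic (1 : Matrix (Fin n) (Fin n) ℝ) :=
  ⟨fun i j => by by_cases h : i = j <;> simp [one_apply, h], fun i => by simp [one_apply]⟩

lemma Stochastic.mul (hA : Stochastic A) (hB : Stochastic B) : Stochastic (A * B) := by
  refine ⟨fun i j => ?_, fun i => ?_⟩ <;> simp only [mul_apply]
  · exact sum_nonneg fun k _ => mul_nonneg (hA.1 i k) (hB.1 k j)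
  · rw [sum_comm]
    simp [← mul_sum, hB.2, hA.2 i]

lemma Stochastic.pow (hA : Stochastic A) (k : ℕ) : Stochastic (A ^ k) := by
  induction k with
  | zero => simpa using Stochastic.one
  | succ k ih => simpa [pow_succ] using ih.mul hA

lemma Stochastic.prod_map {α : Type*} {f : α → Matrix (Fin n) (Fin n) ℝ}
    (hf : ∀ a, Stochastic (f a)) (w : List α) : Stochastic (w.map f).prod := by
  induction w with
  | nil => simpa using Stochastic.one
  | cons a w ih => simpa using (hf a).mul ih

lemma Stochastic.exists_pos (hA : Stochastic A) (i : Fin n) : ∃ k, 0 < A i k := by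
  by_contra! h
  have hzero : ∀ k, A i k = 0 := fun k => le_antisymm (h k) (hA.1 i k)
  simpa [hzero] using hA.2 i

lemma PosColumn.stochastic_mul (hA : Stochastic A) (hM : Stochastic M) (h : PosColumn M) :
    PosColumn (A * M) := by
  obtain ⟨j, hj⟩ := h
  refine ⟨j, fun i => ?_⟩
  obtain ⟨k, hk⟩ := hA.exists_pos i
  exact sum_pos' (fun k _ => mul_nonneg (hA.1 i k) (hM.1 k j)) ⟨k, mem_univ k, mul_pos hk (hj k)⟩

lemma PosColumn.mul_stochastic (hB : Stochastic B) (hM : Stochastic M) (h : PosColumn M) :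
    PosColumn (M * B) := by
  obtain ⟨j, hj⟩ := h
  obtain ⟨k, hk⟩ := hB.exists_pos j
  refine ⟨k, fun i => ?_⟩
  exact sum_pos' (fun l _ => mul_nonneg (hM.1 i l) (hB.1 l k)) ⟨j, mem_univ j, mul_pos (hj i) hk⟩

lemma IsSIA.of_pow {t : ℕ} (h : IsSIA (A ^ t)) (ht : 0 < t) : IsSIA A := by
  obtain ⟨p, hp, hcol⟩ := h
  exact ⟨t * p, Nat.mul_pos ht hp, by rwa [pow_mul]⟩

lemma IsSIA.mul_comm (hA : Stochastic A) (hB : Stochastic B) (h : IsSIA (A * B)) :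
    IsSIA (B * A) := by
  obtain ⟨p, -, hcol⟩ := h
  have hAB : Stochastic ((A * B) ^ p) := (hA.mul hB).pow p
  refine ⟨p + 1, p.succ_pos, ?_⟩
  rw [pow_succ', mul_assoc, ← mul_pow_mul, ← mul_assoc]
  exact (hcol.stochastic_mul hB hAB).mul_stochastic hA (hB.mul hAB)

lemma IsSIA.of_isRotated {α : Type*} {f : α → Matrix (Fin n) (Fin n) ℝ}
    (hf : ∀ a, Stochastic (f a)) {l l' : List α} (hl : l ~r l') (h : IsSIA (l.map f).prod) :
    IsSIA (l'.map f).prod := by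
  obtain ⟨k, rfl⟩ := hl
  rw [List.rotate_eq_drop_append_take_mod]
  rw [← List.take_append_drop (k % l.length) l] at h
  simp only [List.map_append, List.prod_append] at h ⊢
  exact h.mul_comm (.prod_map hf _) (.prod_map hf _)

end Stochastic

namespace List

variable {α : Type*}

theorem exists_eq_flatten_replicate_of_append_comm {u v : List α} (h : u ++ v = v ++ u) :
    ∃ z i j, u = (replicate i z).flatten ∧ v = (replicate j z).flatten := by
  induction hN : u.length + v.length using Nat.strong_induction_on generalizing u v with
  | _ N ih =>
  wlog huv : u.length ≤ v.length generalizing u v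
  · obtain ⟨z, i, j, hu, hv⟩ := this h.symm (by omega) (by omega)
    exact ⟨z, j, i, hv, hu⟩
  obtain rfl | hu := eq_or_ne u []
  · exact ⟨v, 0, 1, by simp, by simp⟩
  obtain ⟨v', rfl⟩ : u <+: v :=
    prefix_of_prefix_length_le (h ▸ prefix_append u v) (prefix_append v u) huv
  have h' : u ++ v' = v' ++ u := by simpa using h
  obtain ⟨z, i, j, rfl, rfl⟩ := ih _ (by simp [← hN, length_pos_iff.2 hu]) h' rfl
  exact ⟨z, i, i + j, rfl, by rw [← flatten_append, ← replicate_add]⟩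

theorem exists_eq_flatten_replicate_of_append_comm_of_ne_nil {u v : List α} (hu : u ≠ [])
    (hv : v ≠ []) (h : u ++ v = v ++ u) : ∃ z k, 1 < k ∧ u ++ v = (replicate k z).flatten := by
  obtain ⟨z, i, j, rfl, rfl⟩ := exists_eq_flatten_replicate_of_append_comm h
  refine ⟨z, i + j, ?_, by rw [← flatten_append, ← replicate_add]⟩
  have hi : i ≠ 0 := by rintro rfl; simp at hu
  have hj : j ≠ 0 := by rintro rfl; simp at hv
  omega

end List

theorem stmt15 {n : ℕ} {α : Type*} [LinearOrder α]
    (f : α → Matrix (Fin n) (Fin n) ℝ) (hf : ∀ a, Stochastic (f a)) (ℓ : ℕ)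
    (hex : ∃ w : List α, w ≠ [] ∧ w.length = ℓ ∧ IsSIA (w.map f).prod)
    (hmin : ∀ w : List α, w ≠ [] → IsSIA (w.map f).prod → ℓ ≤ w.length) :
    ∃ w : List α, w.length = ℓ ∧ IsSIA (w.map f).prod ∧ w ≠ [] ∧
      ∀ u v : List α, w = u ++ v → u ≠ [] → v ≠ [] → w < v ++ u := by
  obtain ⟨w, hw, rfl, hsia⟩ := hex
  obtain ⟨w₀, hw₀, hleast⟩ := w.cyclicPermutations.toFinset.exists_min_image id
    ⟨w, List.mem_toFinset.2 (List.mem_cyclicPermutations_self w)⟩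
  have hrot : w₀ ~r w := List.mem_cyclicPermutations_iff.1 (List.mem_toFinset.1 hw₀)
  have hsia₀ : IsSIA (w₀.map f).prod := hsia.of_isRotated hf hrot.symm
  have hlen₀ : w₀.length = w.length := hrot.perm.length_eq
  refine ⟨w₀, hlen₀, hsia₀, fun h => hw (List.isRotated_nil_iff'.1 (h ▸ hrot)).symm, ?_⟩
  rintro u v rfl hu hv
  have hle : u ++ v ≤ v ++ u := hleast _ (by simpa using List.isRotated_append.trans hrot)
  refine hle.lt_of_ne fun hcomm => ?_
  obtain ⟨z, k, hk, hz⟩ := List.exists_eq_flatten_replicate_of_append_comm_of_ne_nil hu hv hcomm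
  rw [hz] at hsia₀ hlen₀
  simp only [List.map_flatten, List.map_replicate, List.prod_flatten, List.prod_replicate,
    List.length_flatten, List.sum_replicate, smul_eq_mul] at hsia₀ hlen₀
  have hz₀ : z ≠ [] := by
    rintro rfl
    exact hw (List.eq_nil_of_length_eq_zero (by simpa using hlen₀.symm))
  have hshort := hmin z hz₀ (hsia₀.of_pow (by omega))
  have hzpos := List.length_pos_iff.2 hz₀
  nlinarith
end

section
/- For the Wielandt pair of n×n automaton matrices {A, B}, where A corresponds to the function a with a(i) = i+1 for i < n and a(n) = 2, and B corresponds to b with b(i) = i+1 for i < n and b(n) = 1, the product A·B^{n-2} is SIA (for n ≥ 3). -/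
open Matrix Finset
open scoped Classical


def funMat {m : ℕ} (f : Fin m → Fin m) : Matrix (Fin m) (Fin m) ℝ :=
  Matrix.of fun i j => if j = f i then 1 else 0

lemma funMat_mul {m : ℕ} (f g : Fin m → Fin m) :
    funMat f * funMat g = funMat (g ∘ f) := by
  ext i j
  simp only [funMat, Matrix.mul_apply, Matrix.of_apply, Function.comp]
  rw [Finset.sum_eq_single (f i)]
  · simp
  · intro k _ hk; simp [hk]
  · simp

lemma funMat_pow {m : ℕ} (f : Fin m → Fin m) (p : ℕ) :
    funMat f ^ (p + 1) = funMat (f^[p + 1]) := by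
  induction p with
  | zero => simp
  | succ p ih =>
      rw [pow_succ, ih, funMat_mul, ← Function.iterate_succ']

lemma succ_iter_val (n k : ℕ) (x : Fin (n + 3)) :
    (((fun y : Fin (n + 3) => y + 1)^[k] x : Fin (n + 3)) : ℕ) = ((x : ℕ) + k) % (n + 3) := by
  induction k with
  | zero => simp [Nat.mod_eq_of_lt x.isLt]
  | succ k ih =>
      rw [Function.iterate_succ_apply']
      simp only [Fin.val_add, ih]
      have h1 : ((1 : Fin (n + 3)) : ℕ) = 1 := rfl
      rw [h1, Nat.mod_add_mod, ← add_assoc]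



theorem stmt19 (n : ℕ)
    (A B : Matrix (Fin (n + 3)) (Fin (n + 3)) ℝ)
    (hA : A = Matrix.of (fun i j : Fin (n + 3) =>
        if j = (if (i : ℕ) = n + 2 then 1 else i + 1) then (1 : ℝ) else 0))
    (hB : B = Matrix.of (fun i j : Fin (n + 3) =>
        if j = (if (i : ℕ) = n + 2 then 0 else i + 1) then (1 : ℝ) else 0)) :
    IsSIA (A * B ^ (n + 1)) := by
  set a : Fin (n + 3) → Fin (n + 3) :=
    fun i => if (i : ℕ) = n + 2 then 1 else i + 1 with ha
  set b : Fin (n + 3) → Fin (n + 3) :=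
    fun i => if (i : ℕ) = n + 2 then 0 else i + 1 with hbdef
  have hA' : A = funMat a := hA
  have hB' : B = funMat b := hB
  have hb : b = fun y : Fin (n + 3) => y + 1 := by
    funext y
    by_cases hy : (y : ℕ) = n + 2
    · simp only [hbdef, hy, if_pos rfl]
      apply Fin.ext
      simp [Fin.val_add, hy, Nat.add_mod_left]
    · simp [hbdef, hy]
  set g : Fin (n + 3) → Fin (n + 3) := b^[n + 1] ∘ a with hg
  have hM : A * B ^ (n + 1) = funMat g := by
    rw [hA', hB', funMat_pow, funMat_mul]
  have hgval : ∀ i : Fin (n + 3),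
      (g i : ℕ) = if (i : ℕ) = n + 2 ∨ (i : ℕ) = 0 then n + 2 else (i : ℕ) - 1 := by
    intro i
    have hcomp : (g i : ℕ) = ((a i : ℕ) + (n + 1)) % (n + 3) := by
      rw [hg]
      simp only [Function.comp_apply, hb]
      exact succ_iter_val n (n + 1) (a i)
    by_cases hi : (i : ℕ) = n + 2
    · have hav : (a i : ℕ) = 1 := by simp [ha, hi]
      rw [hcomp, hav, if_pos (Or.inl hi),
        Nat.mod_eq_of_lt (show 1 + (n + 1) < n + 3 by omega)]
      omega
    · have hlt : (i : ℕ) < n + 2 := lt_of_le_of_ne (Nat.lt_succ_iff.mp i.isLt) hi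
      have hav : (a i : ℕ) = (i : ℕ) + 1 := by
        simp only [ha, if_neg hi, Fin.val_add]
        have h1 : ((1 : Fin (n + 3)) : ℕ) = 1 := rfl
        rw [h1, Nat.mod_eq_of_lt (by omega)]
      rw [hcomp, hav]
      by_cases h0 : (i : ℕ) = 0
      · rw [if_pos (Or.inr h0), h0,
          Nat.mod_eq_of_lt (show 0 + 1 + (n + 1) < n + 3 by omega)]
        omega
      · rw [if_neg (by tauto)]
        have heq : (i : ℕ) + 1 + (n + 1) = ((i : ℕ) - 1) + (n + 3) := by omega
        rw [heq, Nat.add_mod_right, Nat.mod_eq_of_lt (by omega)]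
  have key : ∀ k, ∀ i : Fin (n + 3), (i : ℕ) < k ∨ (i : ℕ) = n + 2 →
      ((g^[k] i : Fin (n + 3)) : ℕ) = n + 2 := by
    intro k
    induction k with
    | zero => intro i hi; simpa using hi.resolve_left (by omega)
    | succ k ih =>
        intro i hi
        rw [Function.iterate_succ_apply]
        apply ih
        have hv := hgval i
        by_cases hcase : (i : ℕ) = n + 2 ∨ (i : ℕ) = 0
        · right; rw [hv, if_pos hcase]
        · left
          rw [hv, if_neg hcase]
          omega
  refine ⟨n + 2, by omega, ⟨n + 2, by omega⟩, fun i => ?_⟩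
  rw [hM, show funMat g ^ (n + 2) = funMat (g^[n + 2]) from funMat_pow g (n + 1)]
  have hconst : g^[n + 2] i = ⟨n + 2, by omega⟩ := by
    apply Fin.ext
    exact key (n + 2) i (by omega)
  simp only [funMat, Matrix.of_apply, hconst]
  norm_num
end
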